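/- (Theorem 9: reciprocity law for Dedekind-type DC sums) Let h and k be coprime odd positive integers and let p ≥ 1 be an odd integer. Then k^p T_p(h, k) + h^p T_p(k, h) = Σ_{s=0}^{p} C(p,s) h^s k^{p−s} E_s E_{p−s} − 2 E_p, where E_s denotes the s-th Euler number. -/

import Mathlib

open Finset

/-- The Euler numbers `E_n`, defined by `E_0 = 1` and the recurrence
`∑_{l=0}^{n} C(n,l) E_l + E_n = 0` for `n ≥ 1`. -/
def eulerNumber : ℕ → ℚ
  | 0 => 1
  | n + 1 => -(∑ l : Fin (n + 1), ((n + 1).choose l : ℚ) * eulerNumber l) / 2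

/-- The Euler polynomials `E_n(x) = ∑_{l=0}^{n} C(n,l) E_l x^{n-l}`. -/
noncomputable def eulerPoly (n : ℕ) (x : ℝ) : ℝ :=
  ∑ l ∈ Finset.range (n + 1), (n.choose l : ℝ) * (eulerNumber l : ℝ) * x ^ (n - l)

/-- The Euler function `Ē_p(x) = (-1)^⌊x⌋ E_p(x - ⌊x⌋)`. -/
noncomputable def eulerFun (p : ℕ) (x : ℝ) : ℝ := (-1 : ℝ) ^ ⌊x⌋ * eulerPoly p (x - ⌊x⌋)

/-- The Dedekind-type DC sum `T_p(h,k) = 2 ∑_{u=1}^{k-1} (-1)^{u-1} (u/k) Ē_p(hu/k)`. -/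
noncomputable def dcSum (p h k : ℕ) : ℝ :=
  2 * ∑ u ∈ Finset.Ico 1 k, (-1 : ℝ) ^ (u - 1) * ((u : ℝ) / k) * eulerFun p (h * u / k)

/-!
`Ē_p` is `1`-antiperiodic and, for odd `p`, even. For odd `m` it satisfies the multiplication
formula `m^p ∑_{v<m} (-1)^v Ē_p(x + v/m) = Ē_p(m x)`: both sides are `1/m`-antiperiodic in `x`,
and on `[0, 1/m)` it is the polynomial identity `m^p ∑_{v<m} (-1)^v E_p((x + v)/m) = E_p(x)`,
which holds because `E_p` is the only polynomial with `P(x + 1) + P(x) = 2 x^p`.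

For odd `h, k, p`, the involution `(u, v) ↦ (k - u, h - v)` preserves
`(-1)^(u+v) Ē_p(u/k + v/h)` and sends the weight `u/k + v/h` to `2 - (u/k + v/h)`, so the
weighted double sum over `0 < u < k`, `0 < v < h` equals the unweighted one. Splitting the
weight and evaluating the inner sums by the multiplication formula turns this identity into
the reciprocity law, up to the sums `∑_{0<u<k} (-1)^u Ē_p(hu/k)`. These do not depend on `h`,
since `u ↦ hu mod k` permutes the residues, and the multiplication formula at `0` evaluates
them. On the right-hand side, `E_s = 0` for even `s > 0` leaves only the terms `s = 0, p`.
-/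

open Polynomial

lemma neg_one_pow_mul_self {R : Type*} [Ring R] (n : ℕ) :
    (-1 : R) ^ n * (-1) ^ n = 1 := by
  rw [← pow_add, ← two_mul, pow_mul, neg_one_sq, one_pow]

lemma neg_one_pow_sub_of_odd {R : Type*} [Ring R] {m u : ℕ} (hm : Odd m) (hu : u ≤ m) :
    (-1 : R) ^ (m - u) = -(-1) ^ u := by
  rw [← neg_one_mul ((-1 : R) ^ u), ← pow_succ']
  exact neg_one_pow_congr (by
    simp [Nat.even_sub hu, Nat.even_add_one, Nat.not_even_iff_odd.2 hm, Nat.not_even_iff_odd])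

lemma sum_range_neg_one_pow_mul_succ {R : Type*} [CommRing R] {m : ℕ} (hm : Odd m)
    (g : ℕ → R) :
    ∑ v ∈ range m, (-1) ^ v * g (v + 1) = g 0 + g m - ∑ v ∈ range m, (-1) ^ v * g v := by
  have h1 := sum_range_succ (fun v => (-1 : R) ^ v * g v) m
  have h2 := sum_range_succ' (fun v => (-1 : R) ^ v * g v) m
  simp only [hm.neg_one_pow, pow_succ, mul_neg_one, neg_mul, sum_neg_distrib, pow_zero,
    one_mul] at h1 h2
  linear_combination h2 - h1

lemma two_mul_sum_mul_eq_of_involution {ι R : Type*} [CommRing R] {s : Finset ι} {σ : ι → ι}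
    (hσ : ∀ i ∈ s, σ i ∈ s) (hσσ : ∀ i ∈ s, σ (σ i) = i) {t g : ι → R} {T : R}
    (ht : ∀ i ∈ s, t (σ i) = T - t i) (hg : ∀ i ∈ s, g (σ i) = g i) :
    2 * ∑ i ∈ s, t i * g i = T * ∑ i ∈ s, g i := by
  have hrefl : ∑ i ∈ s, t i * g i = ∑ i ∈ s, (T - t i) * g i :=
    sum_nbij' σ σ hσ hσ hσσ hσσ fun i hi => by rw [ht i hi, hg i hi, sub_sub_cancel]
  rw [two_mul]
  nth_rewrite 2 [hrefl]
  rw [← sum_add_distrib, mul_sum]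
  exact sum_congr rfl fun i _ => by ring

lemma Function.Antiperiodic.eq_zero_of_forall_mem_Ico {α β : Type*} [Field α] [LinearOrder α]
    [IsStrictOrderedRing α] [FloorRing α] [AddGroup β] {f : α → β} {c : α}
    (hf : Function.Antiperiodic f c) (hc : 0 < c) (h0 : ∀ y ∈ Set.Ico 0 c, f y = 0) (x : α) :
    f x = 0 := by
  rw [← Int.fract_div_mul_self_add_zsmul_eq c x hc.ne', hf.add_zsmul_eq,
    h0 _ (Int.fract_div_mul_self_mem_Ico c x hc), smul_zero]

lemma Polynomial.eq_zero_of_comp_X_add_C_eq_neg {R : Type*} [CommRing R] [IsDomain R] [CharZero R]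
    {P : R[X]} {c : R} (hP : P.comp (X + C c) = -P) : P = 0 := by
  have hlc := congr(leadingCoeff $hP)
  rw [leadingCoeff_comp (by simp), leadingCoeff_X_add_C, one_pow, mul_one, leadingCoeff_neg,
    eq_neg_iff_add_eq_zero, ← two_mul, mul_eq_zero] at hlc
  exact leadingCoeff_eq_zero.1 (hlc.resolve_left two_ne_zero)

lemma eulerNumber_zero : eulerNumber 0 = 1 := by
  rw [eulerNumber]

lemma sum_range_choose_mul_eulerNumber {n : ℕ} (hn : n ≠ 0) :
    ∑ l ∈ range (n + 1), (n.choose l : ℚ) * eulerNumber l = -eulerNumber n := by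
  obtain ⟨m, rfl⟩ := Nat.exists_eq_succ_of_ne_zero hn
  rw [sum_range_succ, Nat.choose_self, ← Fin.sum_univ_eq_sum_range, eulerNumber]
  ring

noncomputable def eulerPolynomial (n : ℕ) : ℝ[X] :=
  ∑ l ∈ range (n + 1), C ((n.choose l : ℝ) * eulerNumber l) * X ^ (n - l)

lemma eval_eulerPolynomial (n : ℕ) (x : ℝ) : (eulerPolynomial n).eval x = eulerPoly n x := by
  simp [eulerPolynomial, eulerPoly, eval_finsetSum]

lemma eulerPoly_zero_right (n : ℕ) : eulerPoly n 0 = eulerNumber n := by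
  rw [eulerPoly, sum_range_succ, sum_eq_zero fun l hl => ?_]
  · simp
  · simp [Nat.sub_ne_zero_of_lt (mem_range.1 hl)]

lemma eulerPoly_one_right {n : ℕ} (hn : n ≠ 0) : eulerPoly n 1 = -eulerNumber n := by
  simpa [eulerPoly] using congr(((↑) : ℚ → ℝ) $(sum_range_choose_mul_eulerNumber hn))

lemma derivative_eulerPolynomial (n : ℕ) :
    derivative (eulerPolynomial (n + 1)) = C ((n + 1 : ℕ) : ℝ) * eulerPolynomial n := by
  simp only [eulerPolynomial, derivative_sum, derivative_C_mul_X_pow, mul_sum]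
  rw [sum_range_succ, Nat.sub_self, Nat.cast_zero, mul_zero, C_0, zero_mul, add_zero]
  refine sum_congr rfl fun l hl => ?_
  have hl : l ≤ n := Nat.lt_succ_iff.1 (mem_range.1 hl)
  have hchoose : (n.choose l : ℝ) * (n + 1 : ℕ) = (n + 1).choose l * (n + 1 - l : ℕ) := by
    exact_mod_cast Nat.choose_mul_succ_eq n l
  rw [show n + 1 - l - 1 = n - l by omega, ← mul_assoc, ← C_mul]
  congr 2
  linear_combination -(eulerNumber l : ℝ) * hchoose

lemma eulerPolynomial_comp_add_one (n : ℕ) :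
    (eulerPolynomial n).comp (X + 1) + eulerPolynomial n = 2 * X ^ n := by
  induction n with
  | zero => norm_num [eulerPolynomial, eulerNumber_zero]
  | succ n ih =>
    set D := (eulerPolynomial (n + 1)).comp (X + 1) + eulerPolynomial (n + 1) - 2 * X ^ (n + 1)
    have hD : derivative D = C ((n + 1 : ℕ) : ℝ) *
        ((eulerPolynomial n).comp (X + 1) + eulerPolynomial n - 2 * X ^ n) := by
      simp only [D, derivative_sub, derivative_comp, derivative_eulerPolynomial,
        derivative_X, derivative_one, add_zero, Nat.cast_add, Nat.cast_one, map_add, map_natCast,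
        map_one, mul_comp, add_comp, natCast_comp, one_comp, one_mul, derivative_mul,
        derivative_ofNat, zero_mul, derivative_X_pow_succ, zero_add]
      ring
    rw [ih, sub_self, mul_zero] at hD
    have h0 : D.eval 0 = 0 := by
      simp [D, eval_eulerPolynomial, eulerPoly_zero_right, eulerPoly_one_right]
    have hconst := eq_C_of_derivative_eq_zero hD
    rw [coeff_zero_eq_eval_zero, h0, C_0] at hconst
    exact sub_eq_zero.1 hconst

lemma eulerPoly_add_one_add (n : ℕ) (x : ℝ) :
    eulerPoly n (x + 1) + eulerPoly n x = 2 * x ^ n := by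
  simpa [eval_eulerPolynomial] using congr(eval x $(eulerPolynomial_comp_add_one n))

lemma eval_eq_eulerPoly_of_eval_add_one_add {n : ℕ} (P : ℝ[X])
    (hP : ∀ x, P.eval (x + 1) + P.eval x = 2 * x ^ n) (x : ℝ) : P.eval x = eulerPoly n x := by
  have hQ : (P - eulerPolynomial n).comp (X + C 1) = -(P - eulerPolynomial n) := by
    refine Polynomial.funext fun y => ?_
    simp only [sub_comp, eval_sub, eval_comp, eval_add, eval_X, eval_C, eval_neg,
      eval_eulerPolynomial]
    linear_combination hP y - eulerPoly_add_one_add n y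
  rw [← eval_eulerPolynomial, ← sub_eq_zero, ← eval_sub,
    Polynomial.eq_zero_of_comp_X_add_C_eq_neg hQ, eval_zero]

lemma eulerPoly_one_sub (n : ℕ) (x : ℝ) : eulerPoly n (1 - x) = (-1) ^ n * eulerPoly n x := by
  have hsymm := eval_eq_eulerPoly_of_eval_add_one_add (n := n)
    (C ((-1) ^ n) * (eulerPolynomial n).comp (1 - X)) (fun y => ?_) x
  · simp only [eval_mul, eval_C, eval_comp, eval_sub, eval_one, eval_X,
      eval_eulerPolynomial] at hsymm
    rw [← hsymm, ← mul_assoc, neg_one_pow_mul_self, one_mul]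
  · simp only [eval_mul, eval_C, eval_comp, eval_sub, eval_one, eval_X, eval_eulerPolynomial]
    have := eulerPoly_add_one_add n (-y)
    rw [neg_add_eq_sub, neg_pow] at this
    rw [show 1 - (y + 1) = -y by ring]
    linear_combination (-1) ^ n * this + 2 * y ^ n * neg_one_pow_mul_self (R := ℝ) n

lemma eulerNumber_eq_zero_of_even {n : ℕ} (hn : n ≠ 0) (he : Even n) : eulerNumber n = 0 := by
  have h := eulerPoly_one_sub n 0
  rw [sub_zero, eulerPoly_one_right hn, eulerPoly_zero_right, he.neg_one_pow, one_mul,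
    neg_eq_self] at h
  exact_mod_cast h

lemma sum_choose_mul_eulerNumber_mul_eulerNumber {p : ℕ} (hp : Odd p) (h k : ℝ) :
    ∑ s ∈ range (p + 1), (p.choose s : ℝ) * h ^ s * k ^ (p - s) * eulerNumber s *
        eulerNumber (p - s) = (h ^ p + k ^ p) * eulerNumber p := by
  have hp0 : p ≠ 0 := hp.pos.ne'
  rw [sum_eq_add 0 p hp0.symm (fun s hs hs0p => ?_) (fun h0 => absurd (by simp) h0)
    (fun hp' => absurd (by simp) hp')]
  · simp only [Nat.choose_zero_right, Nat.cast_one, pow_zero, mul_one, tsub_zero, one_mul,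
      eulerNumber_zero, Rat.cast_one, Nat.choose_self, tsub_self]
    ring
  · obtain ⟨hs0, hsp⟩ := hs0p
    have hs : s ≤ p := Nat.lt_succ_iff.1 (mem_range.1 hs)
    rcases Nat.even_or_odd s with he | ho
    · simp [eulerNumber_eq_zero_of_even hs0 he]
    · simp [eulerNumber_eq_zero_of_even (by omega) (Nat.Odd.sub_odd hp ho)]

lemma pow_mul_sum_eulerPoly_add_div {m : ℕ} (hm : Odd m) (n : ℕ) (x : ℝ) :
    (m : ℝ) ^ n * ∑ j ∈ range m, (-1) ^ j * eulerPoly n ((x + j) / m) = eulerPoly n x := by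
  have hm0 : (m : ℝ) ≠ 0 := by exact_mod_cast hm.pos.ne'
  have hmul := eval_eq_eulerPoly_of_eval_add_one_add (n := n)
    (C ((m : ℝ) ^ n) *
      ∑ j ∈ range m,
        C ((-1) ^ j) * (eulerPolynomial n).comp ((X + C (j : ℝ)) * C (m : ℝ)⁻¹))
    (fun y => ?_) x
  · simpa [eval_finsetSum, eval_eulerPolynomial, div_eq_mul_inv] using hmul
  · simp only [eval_mul, eval_C, eval_finsetSum, eval_comp, eval_add, eval_X, eval_eulerPolynomial,
      ← div_eq_mul_inv]
    have htel := sum_range_neg_one_pow_mul_succ hm (fun j => eulerPoly n ((y + j) / m))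
    simp only [Nat.cast_add, Nat.cast_one, Nat.cast_zero, add_zero, ← add_assoc,
      add_right_comm y _ 1] at htel
    rw [htel, add_div, div_self hm0, add_comm (eulerPoly n (y / m)), ← mul_add, sub_add_cancel,
      eulerPoly_add_one_add, div_pow, mul_left_comm, mul_div_cancel₀ _ (pow_ne_zero n hm0)]

lemma eulerFun_antiperiodic (p : ℕ) : Function.Antiperiodic (eulerFun p) 1 := fun x => by
  simp only [eulerFun, Int.floor_add_one, zpow_add_one₀ (by norm_num : (-1 : ℝ) ≠ 0),
    Int.cast_add, Int.cast_one, add_sub_add_right_eq_sub]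
  ring

lemma eulerFun_of_mem_Ico {p : ℕ} {x : ℝ} (hx : x ∈ Set.Ico 0 1) :
    eulerFun p x = eulerPoly p x := by
  simp [eulerFun, Int.floor_eq_zero_iff.2 hx]

lemma eulerFun_zero (p : ℕ) : eulerFun p 0 = eulerNumber p := by
  rw [eulerFun_of_mem_Ico (Set.left_mem_Ico.2 zero_lt_one), eulerPoly_zero_right]

lemma eulerFun_neg {p : ℕ} (hp : Odd p) (x : ℝ) : eulerFun p (-x) = eulerFun p x := by
  have hfract : ∀ y ∈ Set.Ico (0 : ℝ) 1, eulerFun p (-y) = eulerFun p y := by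
    rintro y ⟨hy0, hy1⟩
    rcases hy0.eq_or_lt with rfl | hy0
    · rw [neg_zero]
    rw [show -y = (1 - y) - 1 by ring, (eulerFun_antiperiodic p).sub_eq,
      eulerFun_of_mem_Ico ⟨by linarith, by linarith⟩, eulerFun_of_mem_Ico ⟨hy0.le, hy1⟩,
      eulerPoly_one_sub, hp.neg_one_pow, neg_one_mul, neg_neg]
  rw [← Int.fract_add_floor x, neg_add, ← sub_eq_add_neg, ← mul_one (⌊x⌋ : ℝ),
    (eulerFun_antiperiodic p).sub_int_mul_eq, (eulerFun_antiperiodic p).add_int_mul_eq,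
    hfract _ ⟨Int.fract_nonneg x, Int.fract_lt_one x⟩]

lemma pow_mul_sum_eulerFun_add_div {m : ℕ} (hm : Odd m) (p : ℕ) (x : ℝ) :
    (m : ℝ) ^ p * ∑ v ∈ range m, (-1) ^ v * eulerFun p (x + v / m) = eulerFun p (m * x) := by
  have hm0 : (0 : ℝ) < m := by exact_mod_cast hm.pos
  set F : ℝ → ℝ := fun y =>
    (m : ℝ) ^ p * ∑ v ∈ range m, (-1) ^ v * eulerFun p (y + v / m) - eulerFun p (m * y)
  have hanti : Function.Antiperiodic F (1 / m) := fun y => by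
    have htel := sum_range_neg_one_pow_mul_succ hm (fun v => eulerFun p (y + v / m))
    simp only [Nat.cast_add, Nat.cast_one, Nat.cast_zero, zero_div, add_zero, div_self hm0.ne',
      (eulerFun_antiperiodic p) y, add_div, ← add_assoc, add_right_comm y _ (1 / (m : ℝ))]
      at htel
    simp only [F, htel, mul_add, mul_one_div_cancel hm0.ne', (eulerFun_antiperiodic p) (m * y)]
    ring
  have hbase : ∀ y ∈ Set.Ico 0 (1 / (m : ℝ)), F y = 0 := by
    rintro y ⟨hy0, hy1⟩
    have hmy : m * y < 1 := by rwa [lt_div_iff₀' hm0] at hy1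
    have hv (v : ℕ) : y + v / m = (m * y + v) / m := by field_simp
    simp only [F, sub_eq_zero]
    rw [eulerFun_of_mem_Ico ⟨by positivity, hmy⟩,
      ← pow_mul_sum_eulerPoly_add_div hm p (m * y)]
    refine congrArg _ (sum_congr rfl fun v hv' => ?_)
    have hv1 : (v : ℝ) + 1 ≤ m := by exact_mod_cast mem_range.1 hv'
    rw [hv v, eulerFun_of_mem_Ico ⟨by positivity, (div_lt_one hm0).2 (by linarith)⟩]
  exact sub_eq_zero.1 (hanti.eq_zero_of_forall_mem_Ico (by positivity) hbase x)

lemma pow_mul_sum_Ico_eulerFun_add_div {m : ℕ} (hm : Odd m) (p : ℕ) (x : ℝ) :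
    (m : ℝ) ^ p * ∑ v ∈ Ico 1 m, (-1) ^ v * eulerFun p (x + v / m) =
      eulerFun p (m * x) - (m : ℝ) ^ p * eulerFun p x := by
  rw [← pow_mul_sum_eulerFun_add_div hm, sum_range_eq_add_Ico _ hm.pos]
  simp only [Nat.cast_zero, zero_div, add_zero, pow_zero, one_mul]
  ring

lemma sum_range_neg_one_pow_mul_comp_mul_div {f : ℝ → ℝ} (hf : Function.Antiperiodic f 1)
    {h k : ℕ} (hh : Odd h) (hk : Odd k) (hcop : h.Coprime k) :
    ∑ u ∈ range k, (-1) ^ u * f (h * u / k) = ∑ r ∈ range k, (-1) ^ r * f (r / k) := by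
  have hk0 : 0 < k := hk.pos
  have hmaps : ∀ u ∈ range k, h * u % k ∈ range k := fun u _ => mem_range.2 (Nat.mod_lt _ hk0)
  have hinj : Set.InjOn (fun u => h * u % k) (range k) := by
    intro u hu v hv huv
    have := Nat.ModEq.cancel_left_of_coprime (hcop.symm) huv
    rwa [Nat.ModEq, Nat.mod_eq_of_lt (mem_range.1 hu), Nat.mod_eq_of_lt (mem_range.1 hv)] at this
  refine sum_nbij _ hmaps hinj (surjOn_of_injOn_of_card_le _ hmaps hinj le_rfl) fun u _ => ?_
  set q := h * u / k
  set r := h * u % k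
  have hdm : k * q + r = h * u := Nat.div_add_mod (h * u) k
  have harg : (h : ℝ) * u / k = r / k + q • (1 : ℝ) := by
    rw [nsmul_one]
    field_simp
    exact_mod_cast (hdm.symm.trans (by ring) : h * u = r + k * q)
  have hsign : (-1 : ℝ) ^ u = (-1) ^ q * (-1) ^ r := calc
    (-1 : ℝ) ^ u = ((-1) ^ h) ^ u := by rw [hh.neg_one_pow]
    _ = (-1) ^ (k * q + r) := by rw [← pow_mul, hdm]
    _ = (-1) ^ q * (-1) ^ r := by rw [pow_add, pow_mul, hk.neg_one_pow]
  rw [harg, hf.add_nsmul_eq, hsign]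
  push_cast [zsmul_eq_mul]
  linear_combination ((-1) ^ r * f (r / k)) * neg_one_pow_mul_self (R := ℝ) q

noncomputable def alternatingEulerSum (p h k : ℕ) : ℝ :=
  ∑ u ∈ Ico 1 k, (-1) ^ u * eulerFun p (h * u / k)

lemma pow_mul_alternatingEulerSum {p h k : ℕ} (hh : Odd h) (hk : Odd k) (hcop : h.Coprime k) :
    (k : ℝ) ^ p * alternatingEulerSum p h k = (1 - (k : ℝ) ^ p) * eulerNumber p := by
  have hrange := sum_range_neg_one_pow_mul_comp_mul_div (eulerFun_antiperiodic p) hh hk hcop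
  rw [sum_range_eq_add_Ico _ hk.pos, sum_range_eq_add_Ico _ hk.pos] at hrange
  have hmul := pow_mul_sum_eulerFun_add_div hk p 0
  rw [sum_range_eq_add_Ico _ hk.pos] at hmul
  simp only [Nat.cast_zero, mul_zero, zero_div, zero_add, pow_zero, one_mul, eulerFun_zero]
    at hrange hmul
  rw [alternatingEulerSum]
  linear_combination (k : ℝ) ^ p * hrange + hmul

lemma dcSum_eq (p h k : ℕ) :
    dcSum p h k = -2 * ∑ u ∈ Ico 1 k, (u / k : ℝ) * ((-1) ^ u * eulerFun p (h * u / k)) := by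
  rw [dcSum, neg_mul, ← mul_neg, ← sum_neg_distrib]
  refine congrArg _ (sum_congr rfl fun u hu => ?_)
  rw [show (-1 : ℝ) ^ u = (-1) ^ (u - 1) * (-1) by
    rw [← pow_succ, Nat.sub_add_cancel (mem_Ico.1 hu).1]]
  ring

lemma pow_mul_dcSum_one {p k : ℕ} (hp : Odd p) (hk : Odd k) :
    (k : ℝ) ^ p * dcSum p 1 k = ((k : ℝ) ^ p - 1) * eulerNumber p := by
  have hk0 : (k : ℝ) ≠ 0 := by exact_mod_cast hk.pos.ne'
  have hsymm : 2 * ∑ u ∈ Ico 1 k, (u / k : ℝ) * ((-1) ^ u * eulerFun p (u / k)) =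
      1 * ∑ u ∈ Ico 1 k, (-1) ^ u * eulerFun p (u / k) := by
    refine two_mul_sum_mul_eq_of_involution (σ := (k - ·)) (fun u hu => ?_) (fun u hu => ?_)
      (fun u hu => ?_) (fun u hu => ?_) <;> simp only [mem_Ico] at hu
    · simp only [mem_Ico]; omega
    · omega
    · rw [Nat.cast_sub hu.2.le]; field_simp
    · rw [Nat.cast_sub hu.2.le, sub_div, div_self hk0, neg_one_pow_sub_of_odd hk hu.2.le,
        ← neg_sub, eulerFun_neg hp, (eulerFun_antiperiodic p).sub_eq]
      ring
  have halt := pow_mul_alternatingEulerSum (p := p) odd_one hk (Nat.coprime_one_left k)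
  simp only [alternatingEulerSum, Nat.cast_one, one_mul] at halt
  rw [dcSum_eq]
  simp only [Nat.cast_one, one_mul]
  linear_combination (-(k : ℝ) ^ p) * hsymm - halt

lemma weighted_double_sum_eulerFun {p h k : ℕ} (hp : Odd p) (hh : Odd h) (hk : Odd k) :
    ∑ u ∈ Ico 1 k, (u / k : ℝ) *
        ((-1) ^ u * ∑ v ∈ Ico 1 h, (-1) ^ v * eulerFun p (u / k + v / h)) +
      ∑ v ∈ Ico 1 h, (v / h : ℝ) *
        ((-1) ^ v * ∑ u ∈ Ico 1 k, (-1) ^ u * eulerFun p (u / k + v / h)) =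
    ∑ u ∈ Ico 1 k, (-1) ^ u * ∑ v ∈ Ico 1 h, (-1) ^ v * eulerFun p (u / k + v / h) := by
  have hk0 : (k : ℝ) ≠ 0 := by exact_mod_cast hk.pos.ne'
  have hh0 : (h : ℝ) ≠ 0 := by exact_mod_cast hh.pos.ne'
  have hsymm := two_mul_sum_mul_eq_of_involution (s := Ico 1 k ×ˢ Ico 1 h)
    (σ := fun x => (k - x.1, h - x.2)) (t := fun x => (x.1 / k + x.2 / h : ℝ))
    (g := fun x => (-1) ^ x.1 * ((-1) ^ x.2 * eulerFun p (x.1 / k + x.2 / h))) (T := 2)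
    (fun x hx => by simp only [mem_product, mem_Ico] at hx ⊢; omega)
    (fun x hx => by simp only [mem_product, mem_Ico] at hx; ext <;> simp only <;> omega)
    (fun x hx => by
      simp only [mem_product, mem_Ico] at hx
      simp only [Nat.cast_sub hx.1.2.le, Nat.cast_sub hx.2.2.le]
      field_simp
      ring)
    (fun x hx => by
      simp only [mem_product, mem_Ico] at hx
      simp only [Nat.cast_sub hx.1.2.le, Nat.cast_sub hx.2.2.le,
        neg_one_pow_sub_of_odd hk hx.1.2.le, neg_one_pow_sub_of_odd hh hx.2.2.le]
      rw [show ((k : ℝ) - x.1) / k + (h - x.2) / h = -(x.1 / k + x.2 / h - 2 * 1) by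
          field_simp; ring,
        eulerFun_neg hp, (eulerFun_antiperiodic p).periodic_two_mul.sub_eq]
      ring)
  replace hsymm := mul_left_cancel₀ two_ne_zero hsymm
  rw [sum_product, sum_product] at hsymm
  simp only [mul_sum, add_mul, sum_add_distrib] at hsymm ⊢
  rw [← hsymm, sum_comm (s := Ico 1 h)]
  exact congrArg _ (sum_congr rfl fun u _ => sum_congr rfl fun v _ => by ring)

lemma pow_mul_dcSum_add_pow_mul_dcSum {p h k : ℕ} (hp : Odd p) (hh : Odd h) (hk : Odd k) :
    (k : ℝ) ^ p * dcSum p h k + (h : ℝ) ^ p * dcSum p k h =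
      (h : ℝ) ^ p * (k : ℝ) ^ p * (dcSum p 1 k + dcSum p 1 h) -
        2 * (k : ℝ) ^ p *
          (alternatingEulerSum p h k - (h : ℝ) ^ p * alternatingEulerSum p 1 k) := by
  have hinner_u (u : ℕ) :
      (h : ℝ) ^ p * ∑ v ∈ Ico 1 h, (-1) ^ v * eulerFun p (u / k + v / h) =
      eulerFun p (h * u / k) - (h : ℝ) ^ p * eulerFun p (u / k) := by
    rw [pow_mul_sum_Ico_eulerFun_add_div hh, mul_div_assoc]
  have hinner_v (v : ℕ) :
      (k : ℝ) ^ p * ∑ u ∈ Ico 1 k, (-1) ^ u * eulerFun p (u / k + v / h) =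
      eulerFun p (k * v / h) - (k : ℝ) ^ p * eulerFun p (v / h) := by
    simp_rw [add_comm (_ / (k : ℝ))]
    rw [pow_mul_sum_Ico_eulerFun_add_div hk, mul_div_assoc]
  have hsum_u : (h : ℝ) ^ p * ∑ u ∈ Ico 1 k, (u / k : ℝ) *
        ((-1) ^ u * ∑ v ∈ Ico 1 h, (-1) ^ v * eulerFun p (u / k + v / h)) =
      ∑ u ∈ Ico 1 k, (u / k : ℝ) * ((-1) ^ u * eulerFun p (h * u / k)) -
        (h : ℝ) ^ p * ∑ u ∈ Ico 1 k, (u / k : ℝ) * ((-1) ^ u * eulerFun p (u / k)) := by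
    rw [mul_sum, mul_sum, ← sum_sub_distrib]
    exact sum_congr rfl fun u _ => by linear_combination (u / k * (-1) ^ u : ℝ) * hinner_u u
  have hsum_v : (k : ℝ) ^ p * ∑ v ∈ Ico 1 h, (v / h : ℝ) *
        ((-1) ^ v * ∑ u ∈ Ico 1 k, (-1) ^ u * eulerFun p (u / k + v / h)) =
      ∑ v ∈ Ico 1 h, (v / h : ℝ) * ((-1) ^ v * eulerFun p (k * v / h)) -
        (k : ℝ) ^ p * ∑ v ∈ Ico 1 h, (v / h : ℝ) * ((-1) ^ v * eulerFun p (v / h)) := by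
    rw [mul_sum, mul_sum, ← sum_sub_distrib]
    exact sum_congr rfl fun v _ => by linear_combination (v / h * (-1) ^ v : ℝ) * hinner_v v
  have hsum_diag : (h : ℝ) ^ p * ∑ u ∈ Ico 1 k, (-1) ^ u *
        ∑ v ∈ Ico 1 h, (-1) ^ v * eulerFun p (u / k + v / h) =
      alternatingEulerSum p h k - (h : ℝ) ^ p * alternatingEulerSum p 1 k := by
    simp only [alternatingEulerSum, Nat.cast_one, one_mul]
    rw [mul_sum, mul_sum, ← sum_sub_distrib]
    exact sum_congr rfl fun u _ => by linear_combination ((-1) ^ u : ℝ) * hinner_u u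
  simp only [dcSum_eq, Nat.cast_one, one_mul]
  linear_combination 2 * (k : ℝ) ^ p * hsum_u + 2 * (h : ℝ) ^ p * hsum_v -
    2 * (k : ℝ) ^ p * hsum_diag -
    2 * (h : ℝ) ^ p * (k : ℝ) ^ p * weighted_double_sum_eulerFun hp hh hk

theorem dcSum_reciprocity_general (h k p : ℕ)
    (hhodd : Odd h) (hkodd : Odd k) (hcop : Nat.Coprime h k)
    (hpodd : Odd p) :
    (k : ℝ) ^ p * dcSum p h k + (h : ℝ) ^ p * dcSum p k h =
      ∑ s ∈ Finset.range (p + 1),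
          (p.choose s : ℝ) * (h : ℝ) ^ s * (k : ℝ) ^ (p - s) * (eulerNumber s : ℝ) *
            (eulerNumber (p - s) : ℝ)
        - 2 * (eulerNumber p : ℝ) := by
  rw [sum_choose_mul_eulerNumber_mul_eulerNumber hpodd]
  linear_combination pow_mul_dcSum_add_pow_mul_dcSum hpodd hhodd hkodd +
    (h : ℝ) ^ p * pow_mul_dcSum_one hpodd hkodd + (k : ℝ) ^ p * pow_mul_dcSum_one hpodd hhodd -
    2 * pow_mul_alternatingEulerSum hhodd hkodd hcop +
    2 * (h : ℝ) ^ p * pow_mul_alternatingEulerSum (p := p) odd_one hkodd (Nat.coprime_one_left k)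

/-- Theorem 9 (reciprocity law for Dedekind-type DC sums): for coprime odd positive
`h, k` and odd `p ≥ 1`,
`k^p T_p(h,k) + h^p T_p(k,h) = ∑_{s=0}^{p} C(p,s) h^s k^{p−s} E_s E_{p−s} − 2 E_p`. -/
theorem dcSum_reciprocity (h k p : ℕ) (hh : 0 < h) (hk : 0 < k)
    (hhodd : Odd h) (hkodd : Odd k) (hcop : Nat.Coprime h k)
    (hp : 1 ≤ p) (hpodd : Odd p) :
    (k : ℝ) ^ p * dcSum p h k + (h : ℝ) ^ p * dcSum p k h =
      ∑ s ∈ Finset.range (p + 1),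
          (p.choose s : ℝ) * (h : ℝ) ^ s * (k : ℝ) ^ (p - s) * (eulerNumber s : ℝ) *
            (eulerNumber (p - s) : ℝ)
        - 2 * (eulerNumber p : ℝ) :=
  dcSum_reciprocity_general h k p hhodd hkodd hcop hpodd
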